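/- The Hamiltonian density h(v,u;a) := -(a/2)·u·v + a·√Θ - (a/2)·v·log((v+√Θ)/(v-√Θ)), with Θ = v² - 4e^u, satisfies the wave-type equation ∂²h/∂u² = e^u · ∂²h/∂v² on the domain where Θ > 0 and v > √Θ. -/

import Mathlib

/-!
With `s = √(v² - 4eᵘ)`, the number `r = (v + s)/2` is the larger root of `r² - v r + eᵘ = 0`,
so `v - s = 2eᵘ/r` and `log((v+s)/(v-s)) = 2 log r - u`. The `u v` terms cancel and
`h = a (2r - v - v log r)`. Since `∂ᵤr = -eᵘ/s` and `∂ᵥr = r/s`, we get `∂ᵤh = a (r - v)`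
and `∂ᵥh = -a log r`, and finally `∂²ᵤh = -a eᵘ/s = eᵘ ∂²ᵥh`.
-/

open Real Filter Topology

noncomputable def hamFn (a v u : ℝ) : ℝ :=
  -(a / 2) * u * v + a * Real.sqrt (v ^ 2 - 4 * Real.exp u) -
    (a / 2) * v *
      Real.log ((v + Real.sqrt (v ^ 2 - 4 * Real.exp u)) /
        (v - Real.sqrt (v ^ 2 - 4 * Real.exp u)))

noncomputable def upperRoot (v u : ℝ) : ℝ := (v + √(v ^ 2 - 4 * exp u)) / 2

def hamDomain : Set (ℝ × ℝ) := {p | 0 < p.1 ^ 2 - 4 * exp p.2 ∧ √(p.1 ^ 2 - 4 * exp p.2) < p.1}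

theorem isOpen_hamDomain : IsOpen hamDomain := by
  have hΘ : Continuous fun p : ℝ × ℝ => p.1 ^ 2 - 4 * exp p.2 := by fun_prop
  exact (isOpen_lt continuous_const hΘ).inter (isOpen_lt (continuous_sqrt.comp hΘ) continuous_fst)

theorem eventually_mem_hamDomain_right {v u : ℝ} (h : (v, u) ∈ hamDomain) :
    ∀ᶠ u' in 𝓝 u, (v, u') ∈ hamDomain :=
  (Continuous.prodMk_right v).continuousAt.preimage_mem_nhds (isOpen_hamDomain.mem_nhds h)

theorem eventually_mem_hamDomain_left {v u : ℝ} (h : (v, u) ∈ hamDomain) :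
    ∀ᶠ v' in 𝓝 v, (v', u) ∈ hamDomain :=
  (Continuous.prodMk_left u).continuousAt.preimage_mem_nhds (isOpen_hamDomain.mem_nhds h)

section upperRoot

variable {v u : ℝ}

theorem upperRoot_mul_sub (hΘ : 0 ≤ v ^ 2 - 4 * exp u) :
    upperRoot v u * (v - upperRoot v u) = exp u := by
  have hs := sq_sqrt hΘ
  unfold upperRoot
  linear_combination -hs / 4

theorem upperRoot_pos (h : (v, u) ∈ hamDomain) : 0 < upperRoot v u := by
  have hs : 0 < √(v ^ 2 - 4 * exp u) := sqrt_pos.mpr h.1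
  have hv : √(v ^ 2 - 4 * exp u) < v := h.2
  unfold upperRoot
  linarith

theorem two_mul_upperRoot_sub (v u : ℝ) : 2 * upperRoot v u - v = √(v ^ 2 - 4 * exp u) := by
  unfold upperRoot
  ring

theorem hasDerivAt_upperRoot_right (hΘ : 0 < v ^ 2 - 4 * exp u) :
    HasDerivAt (upperRoot v) (-exp u / √(v ^ 2 - 4 * exp u)) u := by
  have hsqrt := ((((hasDerivAt_exp u).const_mul 4).const_sub (v ^ 2)).sqrt hΘ.ne').const_add v
  refine (hsqrt.div_const 2).congr_deriv ?_
  have : 0 < √(v ^ 2 - 4 * exp u) := sqrt_pos.mpr hΘ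
  field_simp
  ring

theorem hasDerivAt_upperRoot_left (hΘ : 0 < v ^ 2 - 4 * exp u) :
    HasDerivAt (upperRoot · u) (upperRoot v u / √(v ^ 2 - 4 * exp u)) v := by
  have hsqrt := (hasDerivAt_id' v).add (((hasDerivAt_pow 2 v).sub_const (4 * exp u)).sqrt hΘ.ne')
  refine (hsqrt.div_const 2).congr_deriv ?_
  have : 0 < √(v ^ 2 - 4 * exp u) := sqrt_pos.mpr hΘ
  unfold upperRoot
  field_simp
  ring

end upperRoot

section hamFn

variable (a : ℝ) {v u : ℝ}

theorem hamFn_eq_of_mem (h : (v, u) ∈ hamDomain) :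
    hamFn a v u = a * (2 * upperRoot v u - v - v * log (upperRoot v u)) := by
  have hΘ : 0 < v ^ 2 - 4 * exp u := h.1
  have hr := upperRoot_pos h
  have hexp := (upperRoot_mul_sub hΘ.le).symm
  have hs := (two_mul_upperRoot_sub v u).symm
  have hquot : (v + √(v ^ 2 - 4 * exp u)) / (v - √(v ^ 2 - 4 * exp u)) =
      upperRoot v u ^ 2 / exp u := by
    have hvr : 0 < v - upperRoot v u := pos_of_mul_pos_right (hexp ▸ exp_pos u) hr.le
    rw [hs, hexp, div_eq_div_iff (by linarith) (by positivity)]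
    ring
  rw [hamFn, hquot, log_div (by positivity) (exp_pos u).ne', log_pow, log_exp, hs]
  push_cast
  ring

theorem eventuallyEq_hamFn_right (h : (v, u) ∈ hamDomain) :
    (fun u' => hamFn a v u') =ᶠ[𝓝 u]
      fun u' => a * (2 * upperRoot v u' - v - v * log (upperRoot v u')) := by
  filter_upwards [eventually_mem_hamDomain_right h] with u' hu' using hamFn_eq_of_mem a hu'

theorem eventuallyEq_hamFn_left (h : (v, u) ∈ hamDomain) :
    (fun v' => hamFn a v' u) =ᶠ[𝓝 v]
      fun v' => a * (2 * upperRoot v' u - v' - v' * log (upperRoot v' u)) := by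
  filter_upwards [eventually_mem_hamDomain_left h] with v' hv' using hamFn_eq_of_mem a hv'

theorem hasDerivAt_hamFn_right (h : (v, u) ∈ hamDomain) :
    HasDerivAt (fun u' => hamFn a v u') (a * (upperRoot v u - v)) u := by
  have hΘ : 0 < v ^ 2 - 4 * exp u := h.1
  have hr := upperRoot_pos h
  have hs : 0 < √(v ^ 2 - 4 * exp u) := sqrt_pos.mpr hΘ
  have hru := hasDerivAt_upperRoot_right hΘ
  have hg := (((hru.const_mul 2).sub_const v).sub ((hru.log hr.ne').const_mul v)).const_mul a
  refine (hg.congr_of_eventuallyEq (eventuallyEq_hamFn_right a h)).congr_deriv ?_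
  rw [← two_mul_upperRoot_sub] at hs ⊢
  rw [← upperRoot_mul_sub hΘ.le]
  field_simp
  ring

theorem hasDerivAt_hamFn_left (h : (v, u) ∈ hamDomain) :
    HasDerivAt (fun v' => hamFn a v' u) (-a * log (upperRoot v u)) v := by
  have hΘ : 0 < v ^ 2 - 4 * exp u := h.1
  have hr := upperRoot_pos h
  have hs : 0 < √(v ^ 2 - 4 * exp u) := sqrt_pos.mpr hΘ
  have hrv := hasDerivAt_upperRoot_left hΘ
  have hg := ((((hrv.const_mul 2).sub (hasDerivAt_id' v)).sub
    ((hasDerivAt_id' v).mul (hrv.log hr.ne')))).const_mul a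
  refine (hg.congr_of_eventuallyEq (eventuallyEq_hamFn_left a h)).congr_deriv ?_
  rw [← two_mul_upperRoot_sub] at hs ⊢
  field_simp
  ring

theorem hasDerivAt_deriv_hamFn_right (h : (v, u) ∈ hamDomain) :
    HasDerivAt (fun u' => deriv (fun u'' => hamFn a v u'') u')
      (-(a * exp u / √(v ^ 2 - 4 * exp u))) u := by
  have hg := ((hasDerivAt_upperRoot_right h.1).sub_const v).const_mul a
  refine (hg.congr_of_eventuallyEq ?_).congr_deriv (by ring)
  filter_upwards [eventually_mem_hamDomain_right h] with u' hu' using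
    (hasDerivAt_hamFn_right a hu').deriv

theorem hasDerivAt_deriv_hamFn_left (h : (v, u) ∈ hamDomain) :
    HasDerivAt (fun v' => deriv (fun v'' => hamFn a v'' u) v')
      (-(a / √(v ^ 2 - 4 * exp u))) v := by
  have hg := ((hasDerivAt_upperRoot_left h.1).log (upperRoot_pos h).ne').const_mul (-a)
  refine (hg.congr_of_eventuallyEq ?_).congr_deriv ?_
  · filter_upwards [eventually_mem_hamDomain_left h] with v' hv' using
      (hasDerivAt_hamFn_left a hv').deriv
  · field_simp [(upperRoot_pos h).ne']

end hamFn

/-- On the domain where `Θ = v² - 4eᵘ > 0` and `v > √Θ`, the Hamiltonian density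
satisfies the wave-type equation `∂²h/∂u² = eᵘ ∂²h/∂v²`. -/
theorem ham_wave_equation (a v u : ℝ) (hΘ : 0 < v ^ 2 - 4 * Real.exp u)
    (hv : Real.sqrt (v ^ 2 - 4 * Real.exp u) < v) :
    deriv (fun u' => deriv (fun u'' => hamFn a v u'') u') u =
      Real.exp u * deriv (fun v' => deriv (fun v'' => hamFn a v'' u) v') v := by
  have h : (v, u) ∈ hamDomain := ⟨hΘ, hv⟩
  rw [(hasDerivAt_deriv_hamFn_right a h).deriv, (hasDerivAt_deriv_hamFn_left a h).deriv]
  ring
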